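/- For every w ∈ ℝ^d, the gradient of the regularized loss satisfies the bound ‖∇L_λ(w)‖₂ ≤ 2D² ‖c + λw‖₂. -/

import Mathlib

/-!
The gradient of `w ↦ E_{φ(·;w)}[f]` is the covariance `Cov_w(f(x), x) = E_w[f(x) (x − E_w x)]`,
since `∇ log φ(x;w) = x − E_w x`. Writing `H(w) = E_w[w·x] − log Z(w)`, the term `E_w x` coming
from differentiating `w·x` cancels `∇ log Z(w) = E_w x`, so `∇H(w) = Cov_w(w·x, x)`. Collecting
terms, `∇L_λ(w) = (1 − β) Cov_w(v·x, x) + βρ Cov_{ρw}(v·x, x)` with `v = c + λw`. Each covariance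
has norm at most `2D²‖v‖` because `|v·x| ≤ D‖v‖` and `‖x − E x‖ ≤ 2D`, and `(1 − β) + βρ ≤ 1`.
-/

open Finset
open scoped InnerProductSpace BigOperators

noncomputable section

/-- The Gibbs distribution on a finite set `X ⊆ ℝ^d` with parameter `w`:
`φ(x; w) = exp(w·x) / ∑_{y ∈ X} exp(w·y)`. -/
def gibbs {d : ℕ} (X : Finset (EuclideanSpace ℝ (Fin d)))
    (w x : EuclideanSpace ℝ (Fin d)) : ℝ :=
  Real.exp ⟪w, x⟫_ℝ / ∑ y ∈ X, Real.exp ⟪w, y⟫_ℝ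

/-- Expectation of a real function under the Gibbs distribution. -/
def gibbsExp {d : ℕ} (X : Finset (EuclideanSpace ℝ (Fin d)))
    (w : EuclideanSpace ℝ (Fin d)) (f : EuclideanSpace ℝ (Fin d) → ℝ) : ℝ :=
  ∑ x ∈ X, gibbs X w x * f x

/-- Variance of a real function under the Gibbs distribution. -/
def gibbsVar {d : ℕ} (X : Finset (EuclideanSpace ℝ (Fin d)))
    (w : EuclideanSpace ℝ (Fin d)) (f : EuclideanSpace ℝ (Fin d) → ℝ) : ℝ :=
  gibbsExp X w (fun x => f x ^ 2) - (gibbsExp X w f) ^ 2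

/-- Mean (a vector) of the Gibbs distribution. -/
def gibbsMean {d : ℕ} (X : Finset (EuclideanSpace ℝ (Fin d)))
    (w : EuclideanSpace ℝ (Fin d)) : EuclideanSpace ℝ (Fin d) :=
  ∑ x ∈ X, gibbs X w x • x

/-- The negative entropy `H(w) = E_{x ∼ φ(·;w)}[log φ(x;w)]`. -/
def negEnt {d : ℕ} (X : Finset (EuclideanSpace ℝ (Fin d)))
    (w : EuclideanSpace ℝ (Fin d)) : ℝ :=
  ∑ x ∈ X, gibbs X w x * Real.log (gibbs X w x)


/-- The fast/slow mixture generator `p(x;w) = (1−β)φ(x;w) + βφ(x;ρw)`. -/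
def pmix {d : ℕ} (X : Finset (EuclideanSpace ℝ (Fin d))) (β ρ : ℝ)
    (w x : EuclideanSpace ℝ (Fin d)) : ℝ :=
  (1 - β) * gibbs X w x + β * gibbs X (ρ • w) x

/-- The regularizer `R(w) = (1−β)H(w) + (β/ρ)H(ρw)`. -/
def reg {d : ℕ} (X : Finset (EuclideanSpace ℝ (Fin d))) (β ρ : ℝ)
    (w : EuclideanSpace ℝ (Fin d)) : ℝ :=
  (1 - β) * negEnt X w + (β / ρ) * negEnt X (ρ • w)

/-- The regularized loss `L_λ(w) = E_{x∼p(·;w)}[c·x] + λ R(w)`. -/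
def rloss {d : ℕ} (X : Finset (EuclideanSpace ℝ (Fin d))) (β ρ lam : ℝ)
    (c w : EuclideanSpace ℝ (Fin d)) : ℝ :=
  (∑ x ∈ X, pmix X β ρ w x * ⟪c, x⟫_ℝ) + lam * reg X β ρ w

section GradientCalculus

variable {F : Type*} [NormedAddCommGroup F] [InnerProductSpace ℝ F] [CompleteSpace F]
  {f g : F → ℝ} {f' g' x : F}

theorem hasGradientAt_inner_const (a x : F) : HasGradientAt (fun y => ⟪y, a⟫_ℝ) a x := by
  rw [hasGradientAt_iff_hasFDerivAt]
  have h : (fun y : F => ⟪y, a⟫_ℝ) = innerSL ℝ a := funext fun y => real_inner_comm a y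
  rw [h]
  exact (innerSL ℝ a).hasFDerivAt.congr_fderiv (by ext; simp)

theorem HasGradientAt.add (hf : HasGradientAt f f' x) (hg : HasGradientAt g g' x) :
    HasGradientAt (fun y => f y + g y) (f' + g') x := by
  rw [hasGradientAt_iff_hasFDerivAt] at *
  rw [map_add]
  exact hf.add hg

theorem HasGradientAt.sub (hf : HasGradientAt f f' x) (hg : HasGradientAt g g' x) :
    HasGradientAt (fun y => f y - g y) (f' - g') x := by
  rw [hasGradientAt_iff_hasFDerivAt] at *
  rw [map_sub]
  exact hf.sub hg

theorem HasGradientAt.const_mul (a : ℝ) (hf : HasGradientAt f f' x) :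
    HasGradientAt (fun y => a * f y) (a • f') x := by
  rw [hasGradientAt_iff_hasFDerivAt] at *
  rw [map_smul]
  exact hf.const_mul a

theorem HasGradientAt.mul (hf : HasGradientAt f f' x) (hg : HasGradientAt g g' x) :
    HasGradientAt (fun y => f y * g y) (f x • g' + g x • f') x := by
  rw [hasGradientAt_iff_hasFDerivAt] at *
  rw [map_add, map_smul, map_smul]
  exact hf.mul hg

theorem HasGradientAt.mul_const (hf : HasGradientAt f f' x) (a : ℝ) :
    HasGradientAt (fun y => f y * a) (a • f') x := by
  rw [hasGradientAt_iff_hasFDerivAt] at *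
  rw [map_smul]
  exact hf.mul_const a

theorem HasGradientAt.sum {ι : Type*} (s : Finset ι) {f : ι → F → ℝ} {f' : ι → F}
    (hf : ∀ i ∈ s, HasGradientAt (f i) (f' i) x) :
    HasGradientAt (fun y => ∑ i ∈ s, f i y) (∑ i ∈ s, f' i) x := by
  rw [hasGradientAt_iff_hasFDerivAt, map_sum]
  exact HasFDerivAt.fun_sum fun i hi => (hf i hi).hasFDerivAt

theorem HasGradientAt.exp (hf : HasGradientAt f f' x) :
    HasGradientAt (fun y => Real.exp (f y)) (Real.exp (f x) • f') x := by
  rw [hasGradientAt_iff_hasFDerivAt] at *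
  rw [map_smul]
  exact hf.exp

theorem HasGradientAt.log (hf : HasGradientAt f f' x) (hx : f x ≠ 0) :
    HasGradientAt (fun y => Real.log (f y)) ((f x)⁻¹ • f') x := by
  rw [hasGradientAt_iff_hasFDerivAt] at *
  rw [map_smul]
  exact hf.log hx

theorem HasGradientAt.comp_const_smul (ρ : ℝ) (hf : HasGradientAt f f' (ρ • x)) :
    HasGradientAt (fun y => f (ρ • y)) (ρ • f') x := by
  rw [hasGradientAt_iff_hasFDerivAt] at *
  refine (hf.comp x ((hasFDerivAt_id x).const_smul ρ)).congr_fderiv ?_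
  ext y
  simp

end GradientCalculus

section Gibbs

variable {d : ℕ} {X : Finset (EuclideanSpace ℝ (Fin d))}

def logPartition (X : Finset (EuclideanSpace ℝ (Fin d))) (w : EuclideanSpace ℝ (Fin d)) : ℝ :=
  Real.log (∑ y ∈ X, Real.exp ⟪w, y⟫_ℝ)

def gibbsCov (X : Finset (EuclideanSpace ℝ (Fin d))) (w : EuclideanSpace ℝ (Fin d))
    (f : EuclideanSpace ℝ (Fin d) → ℝ) : EuclideanSpace ℝ (Fin d) :=
  ∑ x ∈ X, gibbs X w x • (f x • (x - gibbsMean X w))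

theorem sum_exp_inner_pos (hX : X.Nonempty) (w : EuclideanSpace ℝ (Fin d)) :
    0 < ∑ y ∈ X, Real.exp ⟪w, y⟫_ℝ :=
  Finset.sum_pos (fun _ _ => Real.exp_pos _) hX

theorem gibbs_nonneg (w x : EuclideanSpace ℝ (Fin d)) : 0 ≤ gibbs X w x :=
  div_nonneg (Real.exp_pos _).le (Finset.sum_nonneg fun _ _ => (Real.exp_pos _).le)

theorem sum_gibbs (hX : X.Nonempty) (w : EuclideanSpace ℝ (Fin d)) :
    ∑ x ∈ X, gibbs X w x = 1 := by
  simp only [gibbs, ← Finset.sum_div]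
  exact div_self (sum_exp_inner_pos hX w).ne'

theorem gibbs_eq_exp (hX : X.Nonempty) (w x : EuclideanSpace ℝ (Fin d)) :
    gibbs X w x = Real.exp (⟪w, x⟫_ℝ - logPartition X w) := by
  rw [Real.exp_sub, logPartition, Real.exp_log (sum_exp_inner_pos hX w), gibbs]

theorem hasGradientAt_logPartition (hX : X.Nonempty) (w : EuclideanSpace ℝ (Fin d)) :
    HasGradientAt (logPartition X) (gibbsMean X w) w := by
  have hZ : HasGradientAt (fun u => ∑ y ∈ X, Real.exp ⟪u, y⟫_ℝ)
      (∑ y ∈ X, Real.exp ⟪w, y⟫_ℝ • y) w := HasGradientAt.sum X fun y _ =>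
    (hasGradientAt_inner_const y w).exp
  convert hZ.log (sum_exp_inner_pos hX w).ne' using 1
  · rfl
  · rw [gibbsMean, Finset.smul_sum]
    exact Finset.sum_congr rfl fun y _ => by rw [smul_smul, gibbs, div_eq_inv_mul]

theorem hasGradientAt_gibbs (hX : X.Nonempty) (x w : EuclideanSpace ℝ (Fin d)) :
    HasGradientAt (fun u => gibbs X u x) (gibbs X w x • (x - gibbsMean X w)) w := by
  simp_rw [gibbs_eq_exp hX]
  exact ((hasGradientAt_inner_const x w).sub (hasGradientAt_logPartition hX w)).exp

theorem hasGradientAt_gibbsExp (hX : X.Nonempty) (f : EuclideanSpace ℝ (Fin d) → ℝ)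
    (w : EuclideanSpace ℝ (Fin d)) :
    HasGradientAt (fun u => gibbsExp X u f) (gibbsCov X w f) w := by
  convert HasGradientAt.sum X fun x _ => (hasGradientAt_gibbs hX x w).mul_const (f x) using 1
  · rfl
  · exact Finset.sum_congr rfl fun x _ => smul_comm (gibbs X w x) (f x) (x - gibbsMean X w)

theorem negEnt_eq (hX : X.Nonempty) (w : EuclideanSpace ℝ (Fin d)) :
    negEnt X w = gibbsExp X w (fun x => ⟪w, x⟫_ℝ) - logPartition X w := by
  have hlog : ∀ x, Real.log (gibbs X w x) = ⟪w, x⟫_ℝ - logPartition X w := fun x => by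
    rw [gibbs_eq_exp hX, Real.log_exp]
  simp only [negEnt, gibbsExp, hlog, mul_sub, Finset.sum_sub_distrib, ← Finset.sum_mul,
    sum_gibbs hX, one_mul]

theorem hasGradientAt_negEnt (hX : X.Nonempty) (w : EuclideanSpace ℝ (Fin d)) :
    HasGradientAt (negEnt X) (gibbsCov X w fun x => ⟪w, x⟫_ℝ) w := by
  have hE := HasGradientAt.sum X fun x _ =>
    (hasGradientAt_gibbs hX x w).mul (hasGradientAt_inner_const x w)
  convert hE.sub (hasGradientAt_logPartition hX w) using 1
  · exact funext (negEnt_eq hX)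
  · rw [Finset.sum_add_distrib, gibbsMean, add_sub_cancel_left, gibbsCov]
    exact Finset.sum_congr rfl fun x _ => smul_comm (gibbs X w x) ⟪w, x⟫_ℝ (x - gibbsMean X w)

theorem gibbsCov_add (w : EuclideanSpace ℝ (Fin d)) (f g : EuclideanSpace ℝ (Fin d) → ℝ) :
    gibbsCov X w (fun x => f x + g x) = gibbsCov X w f + gibbsCov X w g := by
  simp only [gibbsCov, add_smul, smul_add, Finset.sum_add_distrib]

theorem gibbsCov_const_mul (w : EuclideanSpace ℝ (Fin d)) (a : ℝ)
    (f : EuclideanSpace ℝ (Fin d) → ℝ) :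
    gibbsCov X w (fun x => a * f x) = a • gibbsCov X w f := by
  simp only [gibbsCov, mul_smul, Finset.smul_sum, smul_comm a]

theorem norm_sum_gibbs_smul_le (hX : X.Nonempty) (w : EuclideanSpace ℝ (Fin d))
    {g : EuclideanSpace ℝ (Fin d) → EuclideanSpace ℝ (Fin d)} {C : ℝ}
    (hg : ∀ x ∈ X, ‖g x‖ ≤ C) : ‖∑ x ∈ X, gibbs X w x • g x‖ ≤ C :=
  calc ‖∑ x ∈ X, gibbs X w x • g x‖ ≤ ∑ x ∈ X, gibbs X w x * ‖g x‖ := by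
        refine (norm_sum_le _ _).trans_eq (Finset.sum_congr rfl fun x _ => ?_)
        rw [norm_smul, Real.norm_of_nonneg (gibbs_nonneg w x)]
    _ ≤ ∑ x ∈ X, gibbs X w x * C :=
        Finset.sum_le_sum fun x hx => mul_le_mul_of_nonneg_left (hg x hx) (gibbs_nonneg w x)
    _ = C := by rw [← Finset.sum_mul, sum_gibbs hX, one_mul]

theorem norm_gibbsMean_le (hX : X.Nonempty) {D : ℝ} (hD : ∀ x ∈ X, ‖x‖ ≤ D)
    (w : EuclideanSpace ℝ (Fin d)) : ‖gibbsMean X w‖ ≤ D :=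
  norm_sum_gibbs_smul_le hX w hD

theorem norm_gibbsCov_le (hX : X.Nonempty) {D : ℝ} (hD : ∀ x ∈ X, ‖x‖ ≤ D)
    {f : EuclideanSpace ℝ (Fin d) → ℝ} {M : ℝ} (hf : ∀ x ∈ X, |f x| ≤ M)
    (w : EuclideanSpace ℝ (Fin d)) : ‖gibbsCov X w f‖ ≤ 2 * D * M := by
  refine norm_sum_gibbs_smul_le hX w fun x hx => ?_
  have hsub : ‖x - gibbsMean X w‖ ≤ 2 * D := by
    linarith [norm_sub_le x (gibbsMean X w), hD x hx, norm_gibbsMean_le hX hD w]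
  rw [norm_smul, Real.norm_eq_abs, mul_comm (2 * D)]
  exact mul_le_mul (hf x hx) hsub (norm_nonneg _) ((abs_nonneg _).trans (hf x hx))

theorem norm_gibbsCov_inner_le (hX : X.Nonempty) {D : ℝ} (hD : ∀ x ∈ X, ‖x‖ ≤ D)
    (v w : EuclideanSpace ℝ (Fin d)) :
    ‖gibbsCov X w fun x => ⟪v, x⟫_ℝ‖ ≤ 2 * D ^ 2 * ‖v‖ := by
  have hf : ∀ x ∈ X, |⟪v, x⟫_ℝ| ≤ D * ‖v‖ := fun x hx =>
    (abs_real_inner_le_norm v x).trans (by rw [mul_comm]; gcongr; exact hD x hx)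
  linarith [norm_gibbsCov_le hX hD hf w]

end Gibbs

section Loss

variable {d : ℕ} {X : Finset (EuclideanSpace ℝ (Fin d))} {β ρ : ℝ}

theorem hasGradientAt_sum_pmix_mul (hX : X.Nonempty) (f : EuclideanSpace ℝ (Fin d) → ℝ)
    (w : EuclideanSpace ℝ (Fin d)) :
    HasGradientAt (fun u => ∑ x ∈ X, pmix X β ρ u x * f x)
      ((1 - β) • gibbsCov X w f + (β * ρ) • gibbsCov X (ρ • w) f) w := by
  convert ((hasGradientAt_gibbsExp hX f w).const_mul (1 - β)).add
    (((hasGradientAt_gibbsExp hX f (ρ • w)).comp_const_smul ρ).const_mul β) using 1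
  · funext u
    simp only [pmix, gibbsExp, add_mul, Finset.sum_add_distrib, Finset.mul_sum, mul_assoc]
  · rw [mul_smul]

theorem hasGradientAt_reg (hX : X.Nonempty) (hρ : ρ ≠ 0) (w : EuclideanSpace ℝ (Fin d)) :
    HasGradientAt (reg X β ρ)
      ((1 - β) • (gibbsCov X w fun x => ⟪w, x⟫_ℝ)
        + (β * ρ) • (gibbsCov X (ρ • w) fun x => ⟪w, x⟫_ℝ)) w := by
  convert ((hasGradientAt_negEnt hX w).const_mul (1 - β)).add
    (((hasGradientAt_negEnt hX (ρ • w)).comp_const_smul ρ).const_mul (β / ρ)) using 1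
  · rfl
  · simp only [real_inner_smul_left, gibbsCov_const_mul, smul_smul]
    congr 2
    field_simp

theorem hasGradientAt_rloss (hX : X.Nonempty) (hρ : ρ ≠ 0) (lam : ℝ)
    (c w : EuclideanSpace ℝ (Fin d)) :
    HasGradientAt (rloss X β ρ lam c)
      ((1 - β) • (gibbsCov X w fun x => ⟪c + lam • w, x⟫_ℝ)
        + (β * ρ) • (gibbsCov X (ρ • w) fun x => ⟪c + lam • w, x⟫_ℝ)) w := by
  convert (hasGradientAt_sum_pmix_mul hX (fun x => ⟪c, x⟫_ℝ) w).add
    ((hasGradientAt_reg hX hρ w).const_mul lam) using 1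
  · rfl
  · simp only [inner_add_left, real_inner_smul_left, gibbsCov_add, gibbsCov_const_mul]
    module

end Loss

theorem gradient_rloss_norm_bound_general {d : ℕ}
    (X : Finset (EuclideanSpace ℝ (Fin d))) (hX : X.Nonempty)
    (D : ℝ) (hD : ∀ x ∈ X, ‖x‖ ≤ D)
    (β ρ : ℝ) (hβ : β ∈ Set.Ioo (0 : ℝ) 1) (hρ : ρ ∈ Set.Ioo (0 : ℝ) 1)
    (c : EuclideanSpace ℝ (Fin d)) (lam : ℝ) :
    ∀ w : EuclideanSpace ℝ (Fin d),
      ‖gradient (rloss X β ρ lam c) w‖ ≤ 2 * D ^ 2 * ‖c + lam • w‖ := by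
  intro w
  rw [(hasGradientAt_rloss hX hρ.1.ne' lam c w).gradient]
  set K := 2 * D ^ 2 * ‖c + lam • w‖
  have hK : 0 ≤ K := by positivity
  obtain ⟨hβ0, hβ1⟩ := hβ
  obtain ⟨hρ0, hρ1⟩ := hρ
  calc _ ≤ (1 - β) * K + (β * ρ) * K := by
        refine norm_add_le_of_le ?_ ?_ <;>
          rw [norm_smul, Real.norm_of_nonneg (by positivity)] <;>
          gcongr <;> exact norm_gibbsCov_inner_le hX hD _ _
    _ ≤ K := by nlinarith [mul_pos hβ0 (sub_pos.mpr hρ1)]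

/-- For every `w`, the gradient of the regularized loss satisfies
`‖∇L_λ(w)‖₂ ≤ 2D²‖c + λw‖₂`. -/
theorem gradient_rloss_norm_bound {d : ℕ} (hd : 1 ≤ d)
    (X : Finset (EuclideanSpace ℝ (Fin d))) (hX : X.Nonempty)
    (D : ℝ) (hD : ∀ x ∈ X, ‖x‖ ≤ D)
    (β ρ : ℝ) (hβ : β ∈ Set.Ioo (0 : ℝ) 1) (hρ : ρ ∈ Set.Ioo (0 : ℝ) 1)
    (c : EuclideanSpace ℝ (Fin d)) (lam : ℝ) (hlam : 0 < lam) :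
    ∀ w : EuclideanSpace ℝ (Fin d),
      ‖gradient (rloss X β ρ lam c) w‖ ≤ 2 * D ^ 2 * ‖c + lam • w‖ :=
  gradient_rloss_norm_bound_general X hX D hD β ρ hβ hρ c lam

end
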